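/- arXiv:2405.05512 — 2 statements merged into one kernel-verified Lean document; each statement's English description precedes it below -/
import Mathlib

section
/- The function v(x) := c₁ ū(x) + c₂ x is differentiable on ℝ^d and its Jacobian is sandwiched in the Loewner order: for all x, w ∈ ℝ^d, c₂ ‖w‖₂² ≤ ⟨w, Dv(x) w⟩ ≤ ( c₂ + d·α·β·(α b − a β)/s⁴ ) ‖w‖₂². -/
/-!
Differentiating under the integral sign with `∇ₓ w(x, u) = -(x - β u) w(x, u) / s²`, the terms
in `x` cancel between the numerator and the denominator of `ū`, and `⟪y, Dū(x) y⟫` is `β / s²`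
times the variance of `⟪y, u⟫` under the tilted probability measure `w(x, u) dν(u) / ∫ w(x, ·) dν`.
That variance is nonnegative by Cauchy–Schwarz and at most `sup ⟪y, u⟫² ≤ d ‖y‖²` since `ν` lives
on the unit cube; as `c₁ ≥ 0`, this sandwiches `⟪y, Dv(x) y⟫ = c₂ ‖y‖² + c₁ ⟪y, Dū(x) y⟫`.
-/

open MeasureTheory Real
open scoped RealInnerProductSpace

noncomputable section

theorem mul_exp_neg_sq_div_le {s : ℝ} (hs : 0 < s) (r : ℝ) :
    r * exp (-r ^ 2 / (2 * s)) ≤ √(2 * s) := by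
  set t := r ^ 2 / (2 * s) with ht
  have hr : r ≤ √(2 * s) * (1 + t) := by
    have ht0 : 0 ≤ t := by positivity
    have hrt : r ^ 2 = 2 * s * t := by rw [ht]; field_simp
    calc r ≤ |r| := le_abs_self r
      _ ≤ √(2 * s * (1 + t) ^ 2) := Real.abs_le_sqrt (by rw [hrt]; nlinarith)
      _ = √(2 * s) * (1 + t) := by rw [sqrt_mul (by positivity), sqrt_sq (by positivity)]
  have hexp : (1 + t) * exp (-t) ≤ 1 := by
    rw [exp_neg, ← div_eq_mul_inv, div_le_one (exp_pos t)]
    linarith [add_one_le_exp t]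
  calc r * exp (-r ^ 2 / (2 * s)) = r * exp (-t) := by rw [neg_div]
    _ ≤ √(2 * s) * (1 + t) * exp (-t) := by gcongr
    _ ≤ √(2 * s) := by
      rw [mul_assoc]; exact mul_le_of_le_one_right (sqrt_nonneg _) hexp

variable {E : Type*} [NormedAddCommGroup E] [InnerProductSpace ℝ E]

def gaussWeight (s β : ℝ) (x u : E) : ℝ := exp (-‖x - β • u‖ ^ 2 / (2 * s))

def gaussWeightFDeriv (s β : ℝ) (x u : E) : E →L[ℝ] ℝ :=
  (-s⁻¹ * gaussWeight s β x u) • innerSL ℝ (x - β • u)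

variable {s β : ℝ}

theorem gaussWeight_pos (x u : E) : 0 < gaussWeight s β x u := exp_pos _

theorem gaussWeight_le_one (hs : 0 ≤ s) (x u : E) : gaussWeight s β x u ≤ 1 := by
  rw [gaussWeight, exp_le_one_iff, neg_div, neg_nonpos]
  positivity

theorem continuous_gaussWeight (x : E) : Continuous (gaussWeight s β x) := by
  unfold gaussWeight; fun_prop

theorem continuous_gaussWeightFDeriv (x : E) : Continuous (gaussWeightFDeriv s β x) := by
  unfold gaussWeightFDeriv
  have := continuous_gaussWeight (s := s) (β := β) x
  fun_prop

theorem hasFDerivAt_gaussWeight (x u : E) :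
    HasFDerivAt (gaussWeight s β · u) (gaussWeightFDeriv s β x u) x := by
  have h := (HasFDerivAt.mul_const ((hasFDerivAt_id x).sub_const (β • u)).norm_sq
    (-(2 * s)⁻¹)).exp
  convert h using 1
  · ext x'
    simp only [gaussWeight, id_eq]
    ring_nf
  · ext y
    simp only [gaussWeightFDeriv, gaussWeight, smul_apply, ContinuousLinearMap.comp_id,
      coe_innerSL_apply, smul_eq_mul, nsmul_eq_mul, id_eq]
    ring_nf

theorem gaussWeightFDeriv_apply (x u y : E) :
    gaussWeightFDeriv s β x u y = -s⁻¹ * gaussWeight s β x u * (⟪x, y⟫ - β * ⟪y, u⟫) := by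
  simp [gaussWeightFDeriv, real_inner_comm u y]

theorem norm_gaussWeightFDeriv_le (hs : 0 < s) (x u : E) :
    ‖gaussWeightFDeriv s β x u‖ ≤ s⁻¹ * √(2 * s) := by
  rw [gaussWeightFDeriv, norm_smul, innerSL_apply_norm, norm_mul, norm_neg, norm_inv,
    Real.norm_of_nonneg hs.le, Real.norm_of_nonneg (gaussWeight_pos x u).le, mul_assoc,
    mul_comm (gaussWeight s β x u)]
  exact mul_le_mul_of_nonneg_left (mul_exp_neg_sq_div_le hs _) (inv_nonneg.2 hs.le)

theorem norm_gaussWeightFDeriv_smulRight_le (hs : 0 < s) {R : ℝ} (x : E) {u : E}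
    (hu : ‖u‖ ≤ R) : ‖(gaussWeightFDeriv s β x u).smulRight u‖ ≤ s⁻¹ * √(2 * s) * R := by
  rw [ContinuousLinearMap.norm_smulRight_apply]
  exact mul_le_mul (norm_gaussWeightFDeriv_le hs x u) hu (norm_nonneg _) (by positivity)

section WeightedVariance

variable {α : Type*} [MeasurableSpace α] {μ : Measure α} {ρ f : α → ℝ}

/-- The variance of `f` under the probability measure with density `ρ / ∫ ρ` with respect to `μ`. -/
def weightedVariance (μ : Measure α) (ρ f : α → ℝ) : ℝ :=
  (∫ a, ρ a * f a ^ 2 ∂μ) / (∫ a, ρ a ∂μ) - ((∫ a, ρ a * f a ∂μ) / ∫ a, ρ a ∂μ) ^ 2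

theorem integral_mul_mul_sub (hρ : Integrable ρ μ) (hρf : Integrable (fun a => ρ a * f a) μ)
    (c p q : ℝ) :
    ∫ a, c * ρ a * (p - q * f a) ∂μ = c * (p * ∫ a, ρ a ∂μ - q * ∫ a, ρ a * f a ∂μ) := by
  have h : ∀ a, c * ρ a * (p - q * f a) = c * p * ρ a - c * q * (ρ a * f a) := fun a => by ring
  simp_rw [h]
  rw [integral_sub (hρ.const_mul _) (hρf.const_mul _), integral_const_mul, integral_const_mul]
  ring

theorem sq_integral_mul_le_integral_mul_integral_mul_sq (hρ : 0 ≤ᵐ[μ] ρ) (hρi : Integrable ρ μ)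
    (hρf : Integrable (fun a => ρ a * f a) μ) (hρf2 : Integrable (fun a => ρ a * f a ^ 2) μ) :
    (∫ a, ρ a * f a ∂μ) ^ 2 ≤ (∫ a, ρ a ∂μ) * ∫ a, ρ a * f a ^ 2 ∂μ := by
  -- `t ↦ ∫ ρ (t - f)²` is a nonnegative quadratic polynomial, so its discriminant is `≤ 0`.
  have hquad : ∀ t : ℝ, 0 ≤ (∫ a, ρ a ∂μ) * (t * t) + (-2 * ∫ a, ρ a * f a ∂μ) * t
      + ∫ a, ρ a * f a ^ 2 ∂μ := fun t => by
    have hexp : ∫ a, ρ a * (t - f a) ^ 2 ∂μ = (∫ a, ρ a ∂μ) * (t * t)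
        + (-2 * ∫ a, ρ a * f a ∂μ) * t + ∫ a, ρ a * f a ^ 2 ∂μ := by
      have h : ∀ a, ρ a * (t - f a) ^ 2 = t ^ 2 * ρ a - 2 * t * (ρ a * f a) + ρ a * f a ^ 2 :=
        fun a => by ring
      have hi : Integrable (fun a => t ^ 2 * ρ a - 2 * t * (ρ a * f a)) μ :=
        (hρi.const_mul _).sub (hρf.const_mul _)
      simp_rw [h]
      rw [integral_add hi hρf2,
        integral_sub (hρi.const_mul _) (hρf.const_mul _), integral_const_mul, integral_const_mul]
      ring
    rw [← hexp]
    exact integral_nonneg_of_ae (hρ.mono fun a ha => mul_nonneg ha (sq_nonneg _))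
  have := discrim_le_zero hquad
  rw [discrim] at this
  linarith

theorem weightedVariance_nonneg (hρ : 0 ≤ᵐ[μ] ρ) (hρi : Integrable ρ μ)
    (hρf : Integrable (fun a => ρ a * f a) μ) (hρf2 : Integrable (fun a => ρ a * f a ^ 2) μ)
    (hpos : 0 < ∫ a, ρ a ∂μ) : 0 ≤ weightedVariance μ ρ f := by
  have := sq_integral_mul_le_integral_mul_integral_mul_sq hρ hρi hρf hρf2
  rw [weightedVariance, sub_nonneg, div_pow, div_le_div_iff₀ (by positivity) hpos]
  nlinarith

theorem weightedVariance_le {K : ℝ} (hρ : 0 ≤ᵐ[μ] ρ) (hρi : Integrable ρ μ)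
    (hρf2 : Integrable (fun a => ρ a * f a ^ 2) μ) (hpos : 0 < ∫ a, ρ a ∂μ)
    (hK : ∀ᵐ a ∂μ, f a ^ 2 ≤ K) : weightedVariance μ ρ f ≤ K := by
  have hle : ∫ a, ρ a * f a ^ 2 ∂μ ≤ K * ∫ a, ρ a ∂μ := by
    rw [← integral_const_mul]
    refine integral_mono_ae hρf2 (hρi.const_mul K) ?_
    filter_upwards [hρ, hK] with a (ha : 0 ≤ ρ a) hKa
    nlinarith
  rw [weightedVariance, sub_le_iff_le_add]
  calc (∫ a, ρ a * f a ^ 2 ∂μ) / ∫ a, ρ a ∂μ ≤ K := (div_le_iff₀ hpos).2 hle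
    _ ≤ K + _ := le_add_of_nonneg_right (sq_nonneg _)

end WeightedVariance

theorem sq_inner_le_of_norm_le {R : ℝ} {u : E} (hu : ‖u‖ ≤ R) (y : E) :
    ⟪y, u⟫ ^ 2 ≤ ‖y‖ ^ 2 * R ^ 2 := by
  rw [← sq_abs, ← mul_pow]
  exact pow_le_pow_left₀ (abs_nonneg _)
    ((abs_real_inner_le_norm y u).trans (mul_le_mul_of_nonneg_left hu (norm_nonneg y))) 2

section Tilted

variable [MeasurableSpace E] [BorelSpace E] {ν : Measure E} {R : ℝ}

def tiltedMass (ν : Measure E) (s β : ℝ) (x : E) : ℝ := ∫ u, gaussWeight s β x u ∂ν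

def tiltedMoment (ν : Measure E) (s β : ℝ) (x : E) : E := ∫ u, gaussWeight s β x u • u ∂ν

def tiltedMean (ν : Measure E) (s β : ℝ) (x : E) : E :=
  (tiltedMass ν s β x)⁻¹ • tiltedMoment ν s β x

theorem integrable_gaussWeight_mul (hs : 0 ≤ s) (x : E) {f : E → ℝ} (hf : Integrable f ν) :
    Integrable (fun u => gaussWeight s β x u * f u) ν :=
  hf.bdd_mul (continuous_gaussWeight x).aestronglyMeasurable (c := 1) <| ae_of_all _ fun u => by
    rw [norm_of_nonneg (gaussWeight_pos x u).le]; exact gaussWeight_le_one hs x u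

variable [IsFiniteMeasure ν]

theorem integrable_gaussWeight (hs : 0 ≤ s) (x : E) : Integrable (gaussWeight s β x) ν := by
  simpa using integrable_gaussWeight_mul hs x (integrable_const (1 : ℝ) (μ := ν))

theorem tiltedMass_pos [NeZero ν] (hs : 0 ≤ s) (x : E) : 0 < tiltedMass ν s β x :=
  integral_exp_pos (integrable_gaussWeight hs x)

theorem integrable_gaussWeight_mul_inner (hs : 0 ≤ s) (hR : ∀ᵐ u ∂ν, ‖u‖ ≤ R) (x y : E) :
    Integrable (fun u => gaussWeight s β x u * ⟪y, u⟫) ν :=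
  integrable_gaussWeight_mul hs x <| .of_bound
    (continuous_const.inner continuous_id).aestronglyMeasurable (‖y‖ * R) <| hR.mono fun u hu =>
      (norm_inner_le_norm y u).trans (mul_le_mul_of_nonneg_left hu (norm_nonneg y))

theorem integrable_gaussWeight_mul_inner_sq (hs : 0 ≤ s) (hR : ∀ᵐ u ∂ν, ‖u‖ ≤ R) (x y : E) :
    Integrable (fun u => gaussWeight s β x u * ⟪y, u⟫ ^ 2) ν := by
  refine integrable_gaussWeight_mul hs x (.of_bound
    ((continuous_const.inner continuous_id).pow 2).aestronglyMeasurable (‖y‖ ^ 2 * R ^ 2) ?_)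
  filter_upwards [hR] with u hu
  rw [norm_of_nonneg (sq_nonneg _)]
  exact sq_inner_le_of_norm_le hu y

variable [SecondCountableTopology E]

theorem integrable_gaussWeight_smul_id (hs : 0 ≤ s) (hR : ∀ᵐ u ∂ν, ‖u‖ ≤ R) (x : E) :
    Integrable (fun u => gaussWeight s β x u • u) ν :=
  (Integrable.of_bound aestronglyMeasurable_id R hR).bdd_smul 1
    (continuous_gaussWeight x).aestronglyMeasurable <| ae_of_all _ fun u => by
      rw [norm_of_nonneg (gaussWeight_pos x u).le]; exact gaussWeight_le_one hs x u

theorem integrable_gaussWeightFDeriv (hs : 0 < s) (x : E) :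
    Integrable (gaussWeightFDeriv s β x) ν :=
  .of_bound (continuous_gaussWeightFDeriv x).aestronglyMeasurable _
    (ae_of_all _ fun u => norm_gaussWeightFDeriv_le hs x u)

theorem integrable_gaussWeightFDeriv_smulRight (hs : 0 < s) (hR : ∀ᵐ u ∂ν, ‖u‖ ≤ R) (x : E) :
    Integrable (fun u => (gaussWeightFDeriv s β x u).smulRight u) ν :=
  .of_bound (isBoundedBilinearMap_smulRight.continuous.comp
      ((continuous_gaussWeightFDeriv x).prodMk continuous_id)).aestronglyMeasurable
    _ (hR.mono fun _ => norm_gaussWeightFDeriv_smulRight_le hs x)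

theorem hasFDerivAt_tiltedMass (hs : 0 < s) (x : E) :
    HasFDerivAt (tiltedMass ν s β) (∫ u, gaussWeightFDeriv s β x u ∂ν) x :=
  hasFDerivAt_integral_of_dominated_of_fderiv_le (bound := fun _ => s⁻¹ * √(2 * s))
    Filter.univ_mem (.of_forall fun x' => (continuous_gaussWeight x').aestronglyMeasurable)
    (integrable_gaussWeight hs.le x) (integrable_gaussWeightFDeriv hs x).aestronglyMeasurable
    (ae_of_all _ fun u x' _ => norm_gaussWeightFDeriv_le hs x' u) (integrable_const _)
    (ae_of_all _ fun u x' _ => hasFDerivAt_gaussWeight x' u)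

theorem hasFDerivAt_tiltedMoment (hs : 0 < s) (hR : ∀ᵐ u ∂ν, ‖u‖ ≤ R) (x : E) :
    HasFDerivAt (tiltedMoment ν s β) (∫ u, (gaussWeightFDeriv s β x u).smulRight u ∂ν) x :=
  hasFDerivAt_integral_of_dominated_of_fderiv_le (bound := fun _ => s⁻¹ * √(2 * s) * R)
    Filter.univ_mem
    (.of_forall fun x' => (integrable_gaussWeight_smul_id hs.le hR x').aestronglyMeasurable)
    (integrable_gaussWeight_smul_id hs.le hR x)
    (integrable_gaussWeightFDeriv_smulRight hs hR x).aestronglyMeasurable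
    (hR.mono fun _ hu x' _ => norm_gaussWeightFDeriv_smulRight_le hs x' hu) (integrable_const _)
    (ae_of_all _ fun u x' _ => (hasFDerivAt_gaussWeight x' u).smul_const u)

variable [NeZero ν]

theorem hasFDerivAt_tiltedMean (hs : 0 < s) (hR : ∀ᵐ u ∂ν, ‖u‖ ≤ R) (x : E) :
    HasFDerivAt (tiltedMean ν s β)
      ((tiltedMass ν s β x)⁻¹ • ∫ u, (gaussWeightFDeriv s β x u).smulRight u ∂ν +
        (-(tiltedMass ν s β x ^ 2)⁻¹ • ∫ u, gaussWeightFDeriv s β x u ∂ν).smulRight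
          (tiltedMoment ν s β x)) x :=
  ((hasDerivAt_inv (tiltedMass_pos hs.le x).ne').comp_hasFDerivAt x
    (hasFDerivAt_tiltedMass hs x)).smul (hasFDerivAt_tiltedMoment hs hR x)

theorem differentiable_tiltedMean (hs : 0 < s) (hR : ∀ᵐ u ∂ν, ‖u‖ ≤ R) :
    Differentiable ℝ (tiltedMean ν s β) :=
  fun x => (hasFDerivAt_tiltedMean hs hR x).differentiableAt

variable [CompleteSpace E]

theorem inner_fderiv_tiltedMean (hs : 0 < s) (hR : ∀ᵐ u ∂ν, ‖u‖ ≤ R) (x y : E) :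
    ⟪y, fderiv ℝ (tiltedMean ν s β) x y⟫ =
      β / s * weightedVariance ν (gaussWeight s β x) (⟪y, ·⟫) := by
  have hB := integrable_gaussWeight_mul_inner (β := β) hs.le hR x y
  have hDW : (∫ u, gaussWeightFDeriv s β x u ∂ν) y =
      -s⁻¹ * (⟪x, y⟫ * tiltedMass ν s β x - β * ∫ u, gaussWeight s β x u * ⟪y, u⟫ ∂ν) := by
    rw [ContinuousLinearMap.integral_apply (integrable_gaussWeightFDeriv hs x)]
    simp_rw [gaussWeightFDeriv_apply]
    exact integral_mul_mul_sub (integrable_gaussWeight hs.le x) hB _ _ _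
  have hDM : ⟪y, (∫ u, (gaussWeightFDeriv s β x u).smulRight u ∂ν) y⟫ =
      -s⁻¹ * (⟪x, y⟫ * ∫ u, gaussWeight s β x u * ⟪y, u⟫ ∂ν
        - β * ∫ u, gaussWeight s β x u * ⟪y, u⟫ ^ 2 ∂ν) := by
    have hi := integrable_gaussWeightFDeriv_smulRight (β := β) hs hR x
    rw [ContinuousLinearMap.integral_apply hi, ← integral_inner (hi.apply_continuousLinearMap y)]
    have h : ∀ u, ⟪y, (gaussWeightFDeriv s β x u).smulRight u y⟫ =
        -s⁻¹ * (gaussWeight s β x u * ⟪y, u⟫) * (⟪x, y⟫ - β * ⟪y, u⟫) := fun u => by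
      rw [ContinuousLinearMap.smulRight_apply, real_inner_smul_right, gaussWeightFDeriv_apply]
      ring
    have hC : Integrable (fun u => gaussWeight s β x u * ⟪y, u⟫ * ⟪y, u⟫) ν :=
      (integrable_gaussWeight_mul_inner_sq hs.le hR x y).congr (ae_of_all _ fun u => by ring)
    simp_rw [h, integral_mul_mul_sub hB hC, mul_assoc, ← sq]
  have hM : ⟪y, tiltedMoment ν s β x⟫ = ∫ u, gaussWeight s β x u * ⟪y, u⟫ ∂ν := by
    rw [tiltedMoment, ← integral_inner (integrable_gaussWeight_smul_id hs.le hR x)]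
    simp_rw [real_inner_smul_right]
  rw [(hasFDerivAt_tiltedMean hs hR x).fderiv]
  have hA : ∫ u, gaussWeight s β x u ∂ν = tiltedMass ν s β x := rfl
  have hA0 := (tiltedMass_pos (ν := ν) (β := β) hs.le x).ne'
  have hs0 := hs.ne'
  simp only [add_apply, smul_apply, ContinuousLinearMap.smulRight_apply, inner_add_right,
    real_inner_smul_right, smul_eq_mul, hDW, hDM, hM]
  rw [weightedVariance, hA]
  field_simp
  ring

theorem inner_fderiv_tiltedMean_mem_Icc (hs : 0 < s) (hβ : 0 ≤ β) (hR : ∀ᵐ u ∂ν, ‖u‖ ≤ R)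
    (x y : E) :
    ⟪y, fderiv ℝ (tiltedMean ν s β) x y⟫ ∈ Set.Icc 0 (β / s * (‖y‖ ^ 2 * R ^ 2)) := by
  have hρ : 0 ≤ᵐ[ν] gaussWeight s β x := ae_of_all _ fun u => (gaussWeight_pos x u).le
  have hρi := integrable_gaussWeight (ν := ν) (β := β) hs.le x
  have hρf2 := integrable_gaussWeight_mul_inner_sq (β := β) hs.le hR x y
  have hpos := tiltedMass_pos (ν := ν) (β := β) hs.le x
  have hcoef : 0 ≤ β / s := div_nonneg hβ hs.le
  rw [inner_fderiv_tiltedMean hs hR]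
  exact ⟨mul_nonneg hcoef (weightedVariance_nonneg hρ hρi
      (integrable_gaussWeight_mul_inner hs.le hR x y) hρf2 hpos),
    mul_le_mul_of_nonneg_left (weightedVariance_le hρ hρi hρf2 hpos
      (hR.mono fun u hu => sq_inner_le_of_norm_le hu y)) hcoef⟩

end Tilted

theorem norm_le_sqrt_card_of_abs_le_one {ι : Type*} [Fintype ι] {u : EuclideanSpace ℝ ι}
    (hu : ∀ i, |u i| ≤ 1) : ‖u‖ ≤ √(Fintype.card ι) := by
  rw [EuclideanSpace.norm_eq]
  refine sqrt_le_sqrt ?_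
  calc ∑ i, ‖u i‖ ^ 2 ≤ ∑ _i : ι, (1 : ℝ) :=
        Finset.sum_le_sum fun i _ => pow_le_one₀ (norm_nonneg _) (hu i)
    _ = Fintype.card ι := by simp

theorem velocity_jacobian_loewner_sandwich_general
    {d : ℕ}
    (ν : Measure (EuclideanSpace ℝ (Fin d))) [IsProbabilityMeasure ν]
    (hνsupp : ∀ᵐ u ∂ν, ∀ i, u i ∈ Set.Icc (0 : ℝ) 1)
    (α β a b : ℝ) (hα : 0 ≤ α) (hβ : 0 ≤ β) (ha : a ≤ 0) (hb : 0 ≤ b)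
    (s2 : ℝ) (hs2pos : 0 < s2)
    (w : EuclideanSpace ℝ (Fin d) → EuclideanSpace ℝ (Fin d) → ℝ)
    (hw : ∀ x u, w x u = Real.exp (-‖x - β • u‖ ^ 2 / (2 * s2)))
    (ubar : EuclideanSpace ℝ (Fin d) → EuclideanSpace ℝ (Fin d))
    (hubar : ∀ x, ubar x = (∫ u, w x u ∂ν)⁻¹ • ∫ u, w x u • u ∂ν)
    (c₁ c₂ : ℝ) (hc₁ : c₁ = α * (α * b - a * β) / s2)
    (v : EuclideanSpace ℝ (Fin d) → EuclideanSpace ℝ (Fin d))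
    (hv : ∀ x, v x = c₁ • ubar x + c₂ • x) :
    Differentiable ℝ v ∧
      ∀ x y : EuclideanSpace ℝ (Fin d),
        c₂ * ‖y‖ ^ 2 ≤ ⟪y, fderiv ℝ v x y⟫ ∧
        ⟪y, fderiv ℝ v x y⟫ ≤ (c₂ + d * α * β * (α * b - a * β) / s2 ^ 2) * ‖y‖ ^ 2 := by
  obtain rfl : w = gaussWeight s2 β := funext fun x => funext (hw x)
  obtain rfl : ubar = tiltedMean ν s2 β := funext hubar
  obtain rfl : v = fun x => c₁ • tiltedMean ν s2 β x + c₂ • x := funext hv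
  have hR : ∀ᵐ u ∂ν, ‖u‖ ≤ √d := hνsupp.mono fun u hu => by
    simpa using norm_le_sqrt_card_of_abs_le_one fun i =>
      abs_le.2 ⟨by linarith [(hu i).1], (hu i).2⟩
  have hmean := differentiable_tiltedMean (β := β) hs2pos hR
  have hfderiv : ∀ x y, fderiv ℝ (fun x => c₁ • tiltedMean ν s2 β x + c₂ • x) x y =
      c₁ • fderiv ℝ (tiltedMean ν s2 β) x y + c₂ • y := fun x y => by
    have h : HasFDerivAt (fun x => c₁ • tiltedMean ν s2 β x + c₂ • x)
        (c₁ • fderiv ℝ (tiltedMean ν s2 β) x + c₂ • ContinuousLinearMap.id ℝ _) x :=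
      ((hmean x).hasFDerivAt.const_smul c₁).add ((hasFDerivAt_id x).const_smul c₂)
    rw [h.fderiv]
    rfl
  refine ⟨(hmean.const_smul c₁).add (differentiable_id.const_smul c₂), fun x y => ?_⟩
  obtain ⟨hlow, hup⟩ := inner_fderiv_tiltedMean_mem_Icc hs2pos hβ hR x y
  rw [sq_sqrt d.cast_nonneg] at hup
  have hc₁0 : 0 ≤ c₁ := hc₁ ▸ div_nonneg (mul_nonneg hα (by nlinarith)) hs2pos.le
  have hcoef : c₁ * (β / s2 * (‖y‖ ^ 2 * d)) =
      d * α * β * (α * b - a * β) / s2 ^ 2 * ‖y‖ ^ 2 := by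
    rw [hc₁]; field_simp
  rw [hfderiv, inner_add_right, real_inner_smul_right, real_inner_smul_right,
    real_inner_self_eq_norm_sq]
  constructor
  · linarith [mul_nonneg hc₁0 hlow]
  · linarith [mul_le_mul_of_nonneg_left hup hc₁0]

/-- matrix sandwich from the proof of Proposition III.7 of the paper,
bounded spatial gradient of the velocity. With `ν` a probability measure supported in
the unit cube, `α ≥ 0`, `β ≥ 0`, `a ≤ 0`, `b ≥ 0`, `s² = α² + σ²β² > 0`,
`c₁ = α(αb - aβ)/s²`, `c₂ = (αa + σ²βb)/s²`, and the velocity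
`v(x) = c₁ ū(x) + c₂ x` built from the tilted mean `ū`, the map `v` is differentiable
and its Jacobian is sandwiched in the Loewner order:
`c₂ ‖y‖² ≤ ⟪y, Dv(x) y⟫ ≤ (c₂ + d α β (αb - aβ)/s⁴) ‖y‖²` for all `x, y`. -/
theorem velocity_jacobian_loewner_sandwich
    {d : ℕ} (hd : 1 ≤ d) (σ : ℝ) (hσ : 0 < σ)
    (ν : Measure (EuclideanSpace ℝ (Fin d))) [IsProbabilityMeasure ν]
    (hνsupp : ∀ᵐ u ∂ν, ∀ i, u i ∈ Set.Icc (0 : ℝ) 1)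
    (α β a b : ℝ) (hα : 0 ≤ α) (hβ : 0 ≤ β) (ha : a ≤ 0) (hb : 0 ≤ b)
    (s2 : ℝ) (hs2 : s2 = α ^ 2 + σ ^ 2 * β ^ 2) (hs2pos : 0 < s2)
    (w : EuclideanSpace ℝ (Fin d) → EuclideanSpace ℝ (Fin d) → ℝ)
    (hw : ∀ x u, w x u = Real.exp (-‖x - β • u‖ ^ 2 / (2 * s2)))
    (ubar : EuclideanSpace ℝ (Fin d) → EuclideanSpace ℝ (Fin d))
    (hubar : ∀ x, ubar x = (∫ u, w x u ∂ν)⁻¹ • ∫ u, w x u • u ∂ν)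
    (c₁ c₂ : ℝ) (hc₁ : c₁ = α * (α * b - a * β) / s2)
    (hc₂ : c₂ = (α * a + σ ^ 2 * β * b) / s2)
    (v : EuclideanSpace ℝ (Fin d) → EuclideanSpace ℝ (Fin d))
    (hv : ∀ x, v x = c₁ • ubar x + c₂ • x) :
    Differentiable ℝ v ∧
      ∀ x y : EuclideanSpace ℝ (Fin d),
        c₂ * ‖y‖ ^ 2 ≤ ⟪y, fderiv ℝ v x y⟫ ∧
        ⟪y, fderiv ℝ v x y⟫ ≤ (c₂ + d * α * β * (α * b - a * β) / s2 ^ 2) * ‖y‖ ^ 2 :=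
  velocity_jacobian_loewner_sandwich_general ν hνsupp α β a b hα hβ ha hb s2 hs2pos w hw ubar hubar
    c₁ c₂ hc₁ v hv
end
end

section
/- For every x ∈ ℝ^d, v(x) = P·ṽ(Pᵀx) + c₂·(x − P·Pᵀ·x); that is, the velocity field decomposes into the lift of the d*-dimensional velocity acting on the coordinates Pᵀx along the manifold, plus the linear field c₂·(I − PPᵀ)x acting on the orthogonal complement. -/
/-!
Pythagoras in the column space of `P`: for `PᵀP = 1`,
`‖x - β P u‖² = ‖x - PPᵀx‖² + ‖Pᵀx - β u‖²`. Hence the Gaussian tilt of `ν = P_♯ν̃` at `x`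
is a constant multiple (independent of `u`) of the tilt of `ν̃` at `Pᵀx`; the constant cancels
in the normalised mean, and `P` commutes with the integral, so `ū(x) = P ũ*(Pᵀx)`. The velocity
identity is then the linear algebra `x = PPᵀx + (x - PPᵀx)`.
-/

open MeasureTheory Real Matrix

noncomputable section

/-- An injective linear map on a finite-dimensional space is antilipschitz, so no integrability
hypothesis is needed: both sides vanish when `φ` is not integrable. -/
theorem LinearMap.integral_comp_comm_of_injective {X E F : Type*} [MeasurableSpace X]
    [NormedAddCommGroup E] [NormedSpace ℝ E] [FiniteDimensional ℝ E]
    [NormedAddCommGroup F] [NormedSpace ℝ F] [CompleteSpace F] (μ : Measure X)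
    (L : E →ₗ[ℝ] F) (hL : Function.Injective L) (φ : X → E) :
    ∫ x, L (φ x) ∂μ = L (∫ x, φ x ∂μ) := by
  obtain ⟨K, -, hK⟩ := L.exists_antilipschitzWith (LinearMap.ker_eq_bot.mpr hL)
  exact (LinearMap.toContinuousLinearMap L).integral_comp_comm' hK φ

section WeightedMean

variable {E : Type*} [NormedAddCommGroup E] [NormedSpace ℝ E] [MeasurableSpace E]

def weightedMean (μ : Measure E) (w : E → ℝ) : E :=
  (∫ u, w u ∂μ)⁻¹ • ∫ u, w u • u ∂μ

theorem weightedMean_const_mul (μ : Measure E) (w : E → ℝ) {K : ℝ} (hK : K ≠ 0) :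
    weightedMean μ (fun u => K * w u) = weightedMean μ w := by
  have hnum : ∫ u, (K * w u) • u ∂μ = K • ∫ u, w u • u ∂μ := by
    simp_rw [mul_smul]
    exact integral_smul K _
  rw [weightedMean, weightedMean, hnum, integral_const_mul, smul_smul, _root_.mul_inv_rev,
    mul_assoc, inv_mul_cancel₀ hK, mul_one]

theorem weightedMean_map [FiniteDimensional ℝ E] [BorelSpace E]
    {F : Type*} [NormedAddCommGroup F] [NormedSpace ℝ F] [CompleteSpace F]
    [MeasurableSpace F] [BorelSpace F]
    (L : E →ₗ[ℝ] F) (hL : Function.Injective L) (μ : Measure E) (w : F → ℝ) :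
    weightedMean (μ.map L) w = L (weightedMean μ (w ∘ L)) := by
  have hLemb : MeasurableEmbedding L :=
    (LinearMap.isClosedEmbedding_of_injective (LinearMap.ker_eq_bot.mpr hL)).measurableEmbedding
  simp only [weightedMean, hLemb.integral_map, map_smul, Function.comp_apply,
    ← L.integral_comp_comm_of_injective μ hL]

end WeightedMean

section OrthonormalColumns

variable {m n : Type*} [Fintype m] [Fintype n] [DecidableEq n] {P : Matrix m n ℝ}

theorem mulVec_dotProduct_mulVec_of_transpose_mul_self (hP : Pᵀ * P = 1) (v w : n → ℝ) :
    P *ᵥ v ⬝ᵥ P *ᵥ w = v ⬝ᵥ w := by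
  rw [dotProduct_mulVec, ← mulVec_transpose, mulVec_mulVec, hP, one_mulVec]

theorem sub_mulVec_mulVec_dotProduct_mulVec_of_transpose_mul_self (hP : Pᵀ * P = 1)
    (x : m → ℝ) (v : n → ℝ) :
    (x - P *ᵥ (Pᵀ *ᵥ x)) ⬝ᵥ P *ᵥ v = 0 := by
  rw [dotProduct_mulVec, ← mulVec_transpose, mulVec_sub, mulVec_mulVec, hP, one_mulVec, sub_self,
    zero_dotProduct]

theorem mulVec_injective_of_transpose_mul_self (hP : Pᵀ * P = 1) : Function.Injective P.mulVec :=
  Function.LeftInverse.injective (g := Pᵀ.mulVec) fun v => by rw [mulVec_mulVec, hP, one_mulVec]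

theorem dotProduct_self_sub_mulVec (hP : Pᵀ * P = 1) (x : m → ℝ) (v : n → ℝ) :
    (x - P *ᵥ v) ⬝ᵥ (x - P *ᵥ v) =
      (x - P *ᵥ (Pᵀ *ᵥ x)) ⬝ᵥ (x - P *ᵥ (Pᵀ *ᵥ x)) +
        (Pᵀ *ᵥ x - v) ⬝ᵥ (Pᵀ *ᵥ x - v) := by
  have hx : x - P *ᵥ v = (x - P *ᵥ (Pᵀ *ᵥ x)) + P *ᵥ (Pᵀ *ᵥ x - v) := by
    rw [mulVec_sub]
    abel
  rw [hx, add_dotProduct, dotProduct_add, dotProduct_add, dotProduct_comm (P *ᵥ _),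
    sub_mulVec_mulVec_dotProduct_mulVec_of_transpose_mul_self hP,
    mulVec_dotProduct_mulVec_of_transpose_mul_self hP]
  ring

end OrthonormalColumns

section GaussianWeight

variable {ι : Type*} [Fintype ι]

def gaussianWeight (β s2 : ℝ) (x u : ι → ℝ) : ℝ :=
  exp (-(∑ i, (x i - β * u i) ^ 2) / (2 * s2))

theorem gaussianWeight_eq_exp_dotProduct (β s2 : ℝ) (x u : ι → ℝ) :
    gaussianWeight β s2 x u = exp (-((x - β • u) ⬝ᵥ (x - β • u)) / (2 * s2)) := by
  simp only [gaussianWeight, dotProduct, Pi.sub_apply, Pi.smul_apply, smul_eq_mul, sq]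

variable {m n : Type*} [Fintype m] [Fintype n] [DecidableEq n] {P : Matrix m n ℝ}

theorem gaussianWeight_mulVec (hP : Pᵀ * P = 1) (β s2 : ℝ) (x : m → ℝ) (u : n → ℝ) :
    gaussianWeight β s2 x (P *ᵥ u) =
      exp (-((x - P *ᵥ (Pᵀ *ᵥ x)) ⬝ᵥ (x - P *ᵥ (Pᵀ *ᵥ x))) / (2 * s2)) *
        gaussianWeight β s2 (Pᵀ *ᵥ x) u := by
  rw [gaussianWeight_eq_exp_dotProduct, gaussianWeight_eq_exp_dotProduct, ← mulVec_smul,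
    dotProduct_self_sub_mulVec hP, neg_add, add_div, exp_add]

end GaussianWeight

theorem velocity_manifold_decomposition_general
    {d dstar : ℕ} (P : Matrix (Fin d) (Fin dstar) ℝ) (hP : Pᵀ * P = 1)
    (νt : Measure (Fin dstar → ℝ))
    (ν : Measure (Fin d → ℝ)) (hν : ν = Measure.map (fun u => P.mulVec u) νt)
    (β : ℝ) (s2 : ℝ) (c₁ c₂ : ℝ)
    (ubar : (Fin d → ℝ) → (Fin d → ℝ))
    (hubar : ∀ x, ubar x =
      (∫ u, Real.exp (-(∑ i, (x i - β * u i) ^ 2) / (2 * s2)) ∂ν)⁻¹ •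
        ∫ u, Real.exp (-(∑ i, (x i - β * u i) ^ 2) / (2 * s2)) • u ∂ν)
    (utilde : (Fin dstar → ℝ) → (Fin dstar → ℝ))
    (hutilde : ∀ xt, utilde xt =
      (∫ u, Real.exp (-(∑ j, (xt j - β * u j) ^ 2) / (2 * s2)) ∂νt)⁻¹ •
        ∫ u, Real.exp (-(∑ j, (xt j - β * u j) ^ 2) / (2 * s2)) • u ∂νt)
    (v : (Fin d → ℝ) → (Fin d → ℝ)) (hv : ∀ x, v x = c₁ • ubar x + c₂ • x)
    (vt : (Fin dstar → ℝ) → (Fin dstar → ℝ))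
    (hvt : ∀ xt, vt xt = c₁ • utilde xt + c₂ • xt) :
    ∀ x : Fin d → ℝ,
      v x = P.mulVec (vt (Pᵀ.mulVec x)) + c₂ • (x - P.mulVec (Pᵀ.mulVec x)) := by
  intro x
  have hmean : ubar x = P *ᵥ utilde (Pᵀ *ᵥ x) := by
    rw [hubar, hutilde, hν]
    change weightedMean (νt.map (mulVecLin P)) (gaussianWeight β s2 x) =
      P *ᵥ weightedMean νt (gaussianWeight β s2 (Pᵀ *ᵥ x))
    rw [weightedMean_map _ (mulVec_injective_of_transpose_mul_self hP), Function.comp_def]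
    simp only [mulVecLin_apply, gaussianWeight_mulVec hP]
    rw [weightedMean_const_mul _ _ (exp_pos _).ne']
  rw [hv, hvt, hmean, mulVec_add, mulVec_smul, mulVec_smul, smul_sub]
  abel

/-- velocity decomposition, equation (eq:manifold b) of Lemma VIII.3
of the paper. Let `P` be a `d × d*` matrix with orthonormal columns, `ν̃` a probability
measure on `ℝ^{d*}` supported in the unit cube, and `ν = P_♯ ν̃`. With `s² = α² + σ²β²`,
coefficients `c₁ = α(αb - aβ)/s²`, `c₂ = (αa + σ²βb)/s²`, `d`-dimensional tilted mean
`ū`, `d*`-dimensional tilted mean `ũ*`, and velocity fields `v(x) = c₁ ū(x) + c₂ x`,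
`ṽ(x̃) = c₁ ũ*(x̃) + c₂ x̃`, the velocity decomposes as
`v(x) = P ṽ(Pᵀx) + c₂ (x - PPᵀx)`. -/
theorem velocity_manifold_decomposition
    {d dstar : ℕ} (h1 : 1 ≤ dstar) (hdd : dstar ≤ d)
    (P : Matrix (Fin d) (Fin dstar) ℝ) (hP : Pᵀ * P = 1)
    (νt : Measure (Fin dstar → ℝ)) [IsProbabilityMeasure νt]
    (hsupp : ∀ᵐ u ∂νt, ∀ j, u j ∈ Set.Icc (0 : ℝ) 1)
    (ν : Measure (Fin d → ℝ)) (hν : ν = Measure.map (fun u => P.mulVec u) νt)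
    (σ α β a b : ℝ) (hσ : 0 < σ) (hα : 0 ≤ α) (hβ : 0 ≤ β)
    (s2 : ℝ) (hs2 : s2 = α ^ 2 + σ ^ 2 * β ^ 2) (hs2pos : 0 < s2)
    (c₁ c₂ : ℝ) (hc₁ : c₁ = α * (α * b - a * β) / s2)
    (hc₂ : c₂ = (α * a + σ ^ 2 * β * b) / s2)
    (ubar : (Fin d → ℝ) → (Fin d → ℝ))
    (hubar : ∀ x, ubar x =
      (∫ u, Real.exp (-(∑ i, (x i - β * u i) ^ 2) / (2 * s2)) ∂ν)⁻¹ •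
        ∫ u, Real.exp (-(∑ i, (x i - β * u i) ^ 2) / (2 * s2)) • u ∂ν)
    (utilde : (Fin dstar → ℝ) → (Fin dstar → ℝ))
    (hutilde : ∀ xt, utilde xt =
      (∫ u, Real.exp (-(∑ j, (xt j - β * u j) ^ 2) / (2 * s2)) ∂νt)⁻¹ •
        ∫ u, Real.exp (-(∑ j, (xt j - β * u j) ^ 2) / (2 * s2)) • u ∂νt)
    (v : (Fin d → ℝ) → (Fin d → ℝ)) (hv : ∀ x, v x = c₁ • ubar x + c₂ • x)
    (vt : (Fin dstar → ℝ) → (Fin dstar → ℝ))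
    (hvt : ∀ xt, vt xt = c₁ • utilde xt + c₂ • xt) :
    ∀ x : Fin d → ℝ,
      v x = P.mulVec (vt (Pᵀ.mulVec x)) + c₂ • (x - P.mulVec (Pᵀ.mulVec x)) :=
  velocity_manifold_decomposition_general P hP νt ν hν β s2 c₁ c₂ ubar hubar utilde hutilde v hv vt
    hvt
end
end
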